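/- arXiv:1411.4476 — 4 statements merged into one kernel-verified Lean document; each statement's English description precedes it below -/
import Mathlib

section
/- For every feasible fractional solution (x̄,ȳ,z̄) to the dynamic facility location LP relaxation, there is a feasible fractional solution (x,y,z) whose LP cost is at most 2 times the LP cost of (x̄,ȳ,z̄) and which additionally satisfies: if Z^t = { j ∈ C : x^t_{ij} ≠ x^{t+1}_{ij} for some i ∈ F } denotes the set of clients whose fractional connection changes between time steps t and t+1, then ∑_{t=1}^{T−1} |Z^t| ≤ ∑_{t=1}^{T−1} ∑_{i∈F, j∈C} z^t_{ij}. -/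
/-!
STATEMENT 0: For every feasible fractional solution (x̄,ȳ,z̄) to the dynamic facility location
LP relaxation, there is a feasible fractional solution (x,y,z) whose LP cost is at most 2
times the LP cost of (x̄,ȳ,z̄) and which additionally satisfies: if
Z^t = { j ∈ C : x^t_{ij} ≠ x^{t+1}_{ij} for some i ∈ F } denotes the set of clients whose
fractional connection changes between time steps t and t+1, then
∑_{t=1}^{T−1} |Z^t| ≤ ∑_{t=1}^{T−1} ∑_{i∈F, j∈C} z^t_{ij}.
-/

open Finset

namespace DFL0

noncomputable section

variable {F C : Type*}

/-- Feasibility for the LP relaxation of the dynamic facility location problem with `T` time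
steps (time steps are `0, 1, …, T-1`): nonnegativity, every client fully fractionally
connected at every time step, connection bounded by opening, and `z` dominating the decrease
of the connection variables between consecutive time steps. -/
def Feasible [Fintype F] [Fintype C] (T : ℕ) (x : ℕ → F → C → ℝ) (y : ℕ → F → ℝ)
    (z : ℕ → F → C → ℝ) : Prop :=
  (∀ t, t < T → ∀ i j, 0 ≤ x t i j) ∧
  (∀ t, t < T → ∀ i, 0 ≤ y t i) ∧
  (∀ t, t + 1 < T → ∀ i j, 0 ≤ z t i j) ∧
  (∀ t, t < T → ∀ j, ∑ i, x t i j = 1) ∧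
  (∀ t, t < T → ∀ i j, x t i j ≤ y t i) ∧
  (∀ t, t + 1 < T → ∀ i j, x t i j - x (t+1) i j ≤ z t i j)

/-- The LP cost: hourly opening costs, connection costs, and switching costs. -/
def lpCost [Fintype F] [Fintype C] (T : ℕ) (f : F → ℝ) (d : ℕ → (F ⊕ C) → (F ⊕ C) → ℝ)
    (g : ℝ) (x : ℕ → F → C → ℝ) (y : ℕ → F → ℝ) (z : ℕ → F → C → ℝ) : ℝ :=
  (∑ t ∈ Finset.range T,
    ((∑ i, f i * y t i) + ∑ i, ∑ j, d t (Sum.inl i) (Sum.inr j) * x t i j)) +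
  g * ∑ t ∈ Finset.range (T - 1), ∑ i, ∑ j, z t i j

end

/-!
For each client, cut the time line greedily into blocks, closing a block as soon as the
switching mass `∑ i, z̄ᵗᵢⱼ` accumulated inside it reaches `1/2`. Inside a block the connection
`x̄ᵗ·ⱼ` loses less than `1/2` in total, so the facility-wise minimum over the block still has
mass more than `1/2`; normalised, it is a connection that is constant on the block and at most
`2 x̄`, so doubling `ȳ` keeps it feasible. It changes only at block boundaries, each paid for
by `1/2` unit of `z̄`. Charging a change of client `j` by `zᵗᵢⱼ = xᵗᵢⱼ` costs exactly one unit.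
-/

section Blocks

variable (θ : ℝ) (c : ℕ → ℝ)

noncomputable def blockStart : ℕ → ℕ
  | 0 => 0
  | t + 1 => if ∑ s ∈ Ico (blockStart t) (t + 1), c s < θ then blockStart t else t + 1

noncomputable def block (T t : ℕ) : Finset ℕ :=
  {s ∈ range T | blockStart θ c s = blockStart θ c t}

noncomputable def blockMin (T : ℕ) (w : ℕ → ℝ) (t : ℕ) : ℝ :=
  if h : (block θ c T t).Nonempty then (block θ c T t).inf' h w else 0

variable {θ c}

theorem blockStart_le : ∀ t, blockStart θ c t ≤ t
  | 0 => le_rfl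
  | t + 1 => by
    rw [blockStart]
    split_ifs
    exacts [(blockStart_le t).trans t.le_succ, le_rfl]

theorem blockStart_succ_of_ne {t : ℕ} (h : blockStart θ c (t + 1) ≠ blockStart θ c t) :
    blockStart θ c (t + 1) = t + 1 ∧ θ ≤ ∑ s ∈ Ico (blockStart θ c t) (t + 1), c s := by
  rw [blockStart] at h ⊢
  split_ifs at h ⊢ with hlt
  · exact absurd rfl h
  · exact ⟨rfl, not_lt.mp hlt⟩

theorem sum_Ico_blockStart_lt (hθ : 0 < θ) : ∀ t, ∑ s ∈ Ico (blockStart θ c t) t, c s < θ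
  | 0 => by simpa using hθ
  | t + 1 => by
    rw [blockStart]
    split_ifs with hlt
    · exact hlt
    · simpa using hθ

theorem mul_card_blockStart_ne_add_sum_le (n : ℕ) :
    θ * #{t ∈ range n | blockStart θ c (t + 1) ≠ blockStart θ c t} +
        ∑ s ∈ Ico (blockStart θ c n) n, c s ≤ ∑ s ∈ range n, c s := by
  induction n with
  | zero => simp
  | succ n ih =>
    rw [range_add_one, filter_insert, sum_insert notMem_range_self]
    have hcut := sum_Ico_succ_top (blockStart_le (θ := θ) (c := c) n) c
    by_cases hb : blockStart θ c (n + 1) = blockStart θ c n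
    · rw [if_neg (not_not.mpr hb), hb]
      linarith
    · obtain ⟨hstart, hmass⟩ := blockStart_succ_of_ne hb
      rw [if_pos hb, card_insert_of_notMem (by simp), hstart, Ico_self, sum_empty]
      push_cast
      linarith

theorem mul_card_blockStart_ne_le {n : ℕ} (hc : ∀ t < n, 0 ≤ c t) :
    θ * #{t ∈ range n | blockStart θ c (t + 1) ≠ blockStart θ c t} ≤ ∑ s ∈ range n, c s := by
  have hrest : 0 ≤ ∑ s ∈ Ico (blockStart θ c n) n, c s :=
    sum_nonneg fun s hs => hc s (mem_Ico.mp hs).2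
  linarith [mul_card_blockStart_ne_add_sum_le (θ := θ) (c := c) n]

theorem mem_block {T t s : ℕ} :
    s ∈ block θ c T t ↔ s < T ∧ blockStart θ c s = blockStart θ c t := by
  simp [block]

theorem blockMin_le {T t : ℕ} {w : ℕ → ℝ} (ht : t < T) : blockMin θ c T w t ≤ w t := by
  have hmem : t ∈ block θ c T t := mem_block.mpr ⟨ht, rfl⟩
  rw [blockMin, dif_pos ⟨t, hmem⟩]
  exact inf'_le w hmem

theorem blockMin_nonneg {T t : ℕ} {w : ℕ → ℝ} (hw : ∀ s < T, 0 ≤ w s) :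
    0 ≤ blockMin θ c T w t := by
  rw [blockMin]
  split_ifs
  · exact le_inf' _ _ fun s hs => hw s (mem_block.mp hs).1
  · exact le_rfl

theorem blockMin_succ {T t : ℕ} {w : ℕ → ℝ} (h : blockStart θ c (t + 1) = blockStart θ c t) :
    blockMin θ c T w (t + 1) = blockMin θ c T w t := by
  have hblock : block θ c T (t + 1) = block θ c T t := by simp only [block, h]
  simp only [blockMin, hblock]

end Blocks

theorem sub_sum_le_of_sub_succ_le {w v : ℕ → ℝ} {a s e : ℕ} (has : a ≤ s) (hse : s ≤ e)
    (hdec : ∀ u ∈ Ico a e, w u - w (u + 1) ≤ v u) (hv : ∀ u ∈ Ico a e, 0 ≤ v u) :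
    w a - ∑ u ∈ Ico a e, v u ≤ w s := by
  have htele : ∑ u ∈ Ico a s, (w (u + 1) - w u) = w s - w a := sum_Ico_sub w has
  have hsub : Ico a s ⊆ Ico a e := Ico_subset_Ico le_rfl hse
  have hdrop : ∑ u ∈ Ico a s, (w u - w (u + 1)) ≤ ∑ u ∈ Ico a s, v u :=
    sum_le_sum fun u hu => hdec u (hsub hu)
  have hmono : ∑ u ∈ Ico a s, v u ≤ ∑ u ∈ Ico a e, v u :=
    sum_le_sum_of_subset_of_nonneg hsub fun u hu _ => hv u hu
  rw [sum_sub_distrib] at htele hdrop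
  linarith

section Smoothing

variable {F : Type*} [Fintype F]

noncomputable def smoothing (θ : ℝ) (T : ℕ) (p q : ℕ → F → ℝ) (t : ℕ) (i : F) : ℝ :=
  blockMin θ (fun u => ∑ k, q u k) T (p · i) t /
    ∑ k, blockMin θ (fun u => ∑ k', q u k') T (p · k) t

variable {θ : ℝ} {T : ℕ} {p q : ℕ → F → ℝ}

theorem one_sub_lt_sum_blockMin (hθ : 0 < θ) {t : ℕ} (ht : t < T)
    (hp : ∀ t < T, ∑ i, p t i = 1) (hq : ∀ t, t + 1 < T → ∀ i, 0 ≤ q t i)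
    (hpq : ∀ t, t + 1 < T → ∀ i, p t i - p (t + 1) i ≤ q t i) :
    1 - θ < ∑ i, blockMin θ (fun u => ∑ k, q u k) T (p · i) t := by
  set c : ℕ → ℝ := fun u => ∑ k, q u k
  set a := blockStart θ c t
  have hne : (block θ c T t).Nonempty := ⟨t, mem_block.mpr ⟨ht, rfl⟩⟩
  set e := (block θ c T t).max' hne
  obtain ⟨heT, hea⟩ := mem_block.mp ((block θ c T t).max'_mem hne)
  -- every `s` in the block lies in `[a, e]`, and less than `θ` is switched during `[a, e)`
  have hlow : ∀ i, p a i - ∑ u ∈ Ico a e, q u i ≤ blockMin θ c T (p · i) t := fun i => by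
    rw [blockMin, dif_pos hne]
    refine le_inf' _ _ fun s hs => ?_
    obtain ⟨hsT, hsa⟩ := mem_block.mp hs
    have has : a ≤ s := hsa.symm.le.trans (blockStart_le s)
    exact sub_sum_le_of_sub_succ_le has (le_max' _ s hs)
      (fun u hu => hpq u (by grind) i) (fun u hu => hq u (by grind) i)
  have hsum := sum_le_sum fun i (_ : i ∈ univ) => hlow i
  rw [sum_sub_distrib, hp a ((blockStart_le t).trans_lt ht), sum_comm] at hsum
  have hsmall := sum_Ico_blockStart_lt (c := c) hθ e
  rw [hea] at hsmall
  linarith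

theorem smoothing_nonneg (hp : ∀ t < T, ∀ i, 0 ≤ p t i) (t : ℕ) (i : F) :
    0 ≤ smoothing θ T p q t i :=
  div_nonneg (blockMin_nonneg fun s hs => hp s hs i)
    (sum_nonneg fun k _ => blockMin_nonneg fun s hs => hp s hs k)

theorem sum_smoothing (hθ : θ ∈ Set.Ioo 0 1) {t : ℕ} (ht : t < T)
    (hp : ∀ t < T, ∑ i, p t i = 1) (hq : ∀ t, t + 1 < T → ∀ i, 0 ≤ q t i)
    (hpq : ∀ t, t + 1 < T → ∀ i, p t i - p (t + 1) i ≤ q t i) :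
    ∑ i, smoothing θ T p q t i = 1 := by
  have hpos := one_sub_lt_sum_blockMin hθ.1 ht hp hq hpq
  unfold smoothing
  rw [← sum_div, div_self (by linarith [hθ.2])]

theorem one_sub_mul_smoothing_le (hθ : θ ∈ Set.Ioo 0 1) {t : ℕ} (ht : t < T)
    (hp₀ : ∀ t < T, ∀ i, 0 ≤ p t i) (hp : ∀ t < T, ∑ i, p t i = 1)
    (hq : ∀ t, t + 1 < T → ∀ i, 0 ≤ q t i)
    (hpq : ∀ t, t + 1 < T → ∀ i, p t i - p (t + 1) i ≤ q t i) (i : F) :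
    (1 - θ) * smoothing θ T p q t i ≤ p t i := by
  have hS := one_sub_lt_sum_blockMin hθ.1 ht hp hq hpq
  have hm : 0 ≤ blockMin θ (fun u => ∑ k, q u k) T (p · i) t :=
    blockMin_nonneg fun s hs => hp₀ s hs i
  unfold smoothing
  set m := blockMin θ (fun u => ∑ k, q u k) T (p · i) t
  set S := ∑ k, blockMin θ (fun u => ∑ k', q u k') T (p · k) t
  calc (1 - θ) * (m / S) = m * ((1 - θ) / S) := by ring
    _ ≤ m * 1 := mul_le_mul_of_nonneg_left ((div_le_one (by linarith [hθ.2])).mpr hS.le) hm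
    _ ≤ p t i := by simpa using blockMin_le ht

theorem smoothing_succ {t : ℕ}
    (h : blockStart θ (fun u => ∑ k, q u k) (t + 1) = blockStart θ (fun u => ∑ k, q u k) t) :
    smoothing θ T p q (t + 1) = smoothing θ T p q t := by
  funext i
  simp only [smoothing, blockMin_succ h]

theorem mul_card_smoothing_ne_le (hθ : 0 ≤ θ) (hq : ∀ t, t + 1 < T → ∀ i, 0 ≤ q t i) :
    θ * #{t ∈ range (T - 1) | ∃ i, smoothing θ T p q t i ≠ smoothing θ T p q (t + 1) i} ≤
      ∑ t ∈ range (T - 1), ∑ i, q t i := by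
  set c : ℕ → ℝ := fun u => ∑ k, q u k
  have hsub : {t ∈ range (T - 1) | ∃ i, smoothing θ T p q t i ≠ smoothing θ T p q (t + 1) i} ⊆
      {t ∈ range (T - 1) | blockStart θ c (t + 1) ≠ blockStart θ c t} := by
    intro t
    simp only [mem_filter]
    rintro ⟨ht, i, hi⟩
    exact ⟨ht, fun hb => hi (by rw [smoothing_succ hb])⟩
  calc θ * #{t ∈ range (T - 1) | ∃ i, smoothing θ T p q t i ≠ smoothing θ T p q (t + 1) i}
      ≤ θ * #{t ∈ range (T - 1) | blockStart θ c (t + 1) ≠ blockStart θ c t} := by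
        gcongr
    _ ≤ ∑ t ∈ range (T - 1), c t :=
        mul_card_blockStart_ne_le fun t ht => sum_nonneg fun i _ => hq t (by omega) i

end Smoothing

section Switching

variable {F C : Type*} [Fintype F] [Fintype C] {T : ℕ} {x : ℕ → F → C → ℝ}

open Classical in
noncomputable def switchVar (x : ℕ → F → C → ℝ) (t : ℕ) (i : F) (j : C) : ℝ :=
  if ∃ i', x t i' j ≠ x (t + 1) i' j then x t i j else 0

theorem feasible_switchVar {y : ℕ → F → ℝ} (hx₀ : ∀ t < T, ∀ i j, 0 ≤ x t i j)
    (hy₀ : ∀ t < T, ∀ i, 0 ≤ y t i) (hx : ∀ t < T, ∀ j, ∑ i, x t i j = 1)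
    (hxy : ∀ t < T, ∀ i j, x t i j ≤ y t i) : Feasible T x y (switchVar x) := by
  refine ⟨hx₀, hy₀, fun t ht i j => ?_, hx, hxy, fun t ht i j => ?_⟩ <;>
    unfold switchVar <;> split_ifs with hchange
  · exact hx₀ t (by omega) i j
  · exact le_rfl
  · linarith [hx₀ (t + 1) ht i j]
  · simp only [not_exists, not_not] at hchange
    rw [hchange i, sub_self]

theorem sum_switchVar (hx : ∀ t < T, ∀ j, ∑ i, x t i j = 1) {t : ℕ} (ht : t < T) :
    ∑ i, ∑ j, switchVar x t i j = #{j | ∃ i, x t i j ≠ x (t + 1) i j} := by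
  rw [sum_comm, card_filter]
  push_cast
  refine sum_congr rfl fun j _ => ?_
  unfold switchVar
  split_ifs
  · exact hx t ht j
  · exact sum_const_zero

end Switching

theorem lpCost_le_mul {F C : Type*} [Fintype F] [Fintype C] {T : ℕ} {f : F → ℝ}
    {d : ℕ → (F ⊕ C) → (F ⊕ C) → ℝ} {g κ : ℝ} {x xb : ℕ → F → C → ℝ} {y yb : ℕ → F → ℝ}
    {z zb : ℕ → F → C → ℝ} (hd : ∀ t < T, ∀ u v, 0 ≤ d t u v) (hg : 0 ≤ g)
    (hy : ∀ t < T, ∑ i, f i * y t i ≤ κ * ∑ i, f i * yb t i)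
    (hx : ∀ t < T, ∀ i j, x t i j ≤ κ * xb t i j)
    (hz : ∑ t ∈ range (T - 1), ∑ i, ∑ j, z t i j ≤ κ * ∑ t ∈ range (T - 1), ∑ i, ∑ j, zb t i j) :
    lpCost T f d g x y z ≤ κ * lpCost T f d g xb yb zb := by
  unfold lpCost
  rw [mul_add, mul_left_comm κ g]
  refine add_le_add ?_ (mul_le_mul_of_nonneg_left hz hg)
  rw [mul_sum]
  refine sum_le_sum fun t ht => ?_
  have ht : t < T := mem_range.mp ht
  rw [mul_add]
  refine add_le_add (hy t ht) ?_
  rw [mul_sum]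
  refine sum_le_sum fun i _ => ?_
  rw [mul_sum]
  refine sum_le_sum fun j _ => ?_
  calc d t (.inl i) (.inr j) * x t i j ≤ d t (.inl i) (.inr j) * (κ * xb t i j) :=
        mul_le_mul_of_nonneg_left (hx t ht i j) (hd t ht _ _)
    _ = κ * (d t (.inl i) (.inr j) * xb t i j) := by ring

noncomputable def smoothConnection {F C : Type*} [Fintype F] (θ : ℝ) (T : ℕ)
    (x z : ℕ → F → C → ℝ) (t : ℕ) (i : F) (j : C) : ℝ :=
  smoothing θ T (fun s i => x s i j) (fun s i => z s i j) t i

theorem mul_sum_card_smoothConnection_ne_le {F C : Type*} [Fintype F] [Fintype C] {θ : ℝ}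
    {T : ℕ} {x z : ℕ → F → C → ℝ} (hθ : 0 ≤ θ) (hz : ∀ t, t + 1 < T → ∀ i j, 0 ≤ z t i j) :
    θ * ∑ t ∈ range (T - 1),
        (#{j | ∃ i, smoothConnection θ T x z t i j ≠ smoothConnection θ T x z (t + 1) i j} : ℝ) ≤
      ∑ t ∈ range (T - 1), ∑ i, ∑ j, z t i j := by
  have hdouble : ∑ t ∈ range (T - 1),
        #{j | ∃ i, smoothConnection θ T x z t i j ≠ smoothConnection θ T x z (t + 1) i j} =
      ∑ j, #{t ∈ range (T - 1) |
        ∃ i, smoothConnection θ T x z t i j ≠ smoothConnection θ T x z (t + 1) i j} :=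
    sum_card_bipartiteAbove_eq_sum_card_bipartiteBelow _
  calc θ * ∑ t ∈ range (T - 1),
        (#{j | ∃ i, smoothConnection θ T x z t i j ≠ smoothConnection θ T x z (t + 1) i j} : ℝ)
      = ∑ j, θ * #{t ∈ range (T - 1) |
          ∃ i, smoothConnection θ T x z t i j ≠ smoothConnection θ T x z (t + 1) i j} := by
        rw [← mul_sum]
        congr 1
        exact_mod_cast hdouble
    _ ≤ ∑ j, ∑ t ∈ range (T - 1), ∑ i, z t i j :=
        sum_le_sum fun j _ => mul_card_smoothing_ne_le hθ fun t ht i => hz t ht i j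
    _ = ∑ t ∈ range (T - 1), ∑ i, ∑ j, z t i j := by
        rw [sum_comm]
        exact sum_congr rfl fun t _ => sum_comm

theorem preprocessing_one_general
    {F C : Type*} [Fintype F] [Fintype C]
    (T : ℕ) (f : F → ℝ)
    (d : ℕ → (F ⊕ C) → (F ⊕ C) → ℝ)
    (hd_nonneg : ∀ t, t < T → ∀ u v, 0 ≤ d t u v)
    (g : ℝ) (hg : 0 ≤ g)
    (xb : ℕ → F → C → ℝ) (yb : ℕ → F → ℝ) (zb : ℕ → F → C → ℝ)
    (hfeas : Feasible T xb yb zb) :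
    ∃ (x : ℕ → F → C → ℝ) (y : ℕ → F → ℝ) (z : ℕ → F → C → ℝ),
      Feasible T x y z ∧
      lpCost T f d g x y z ≤ 2 * lpCost T f d g xb yb zb ∧
      ∑ t ∈ Finset.range (T - 1),
          (((Finset.univ.filter fun j : C => ∃ i : F, x t i j ≠ x (t+1) i j).card : ℝ)) ≤
        ∑ t ∈ Finset.range (T - 1), ∑ i : F, ∑ j : C, z t i j := by
  obtain ⟨hxb₀, hyb₀, hzb₀, hxb, hxyb, hzxb⟩ := hfeas
  have hθ : (1 / 2 : ℝ) ∈ Set.Ioo 0 1 := by norm_num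
  set x := smoothConnection (1 / 2) T xb zb
  have hx₀ : ∀ t < T, ∀ i j, 0 ≤ x t i j := fun t _ i j =>
    smoothing_nonneg (fun s hs i => hxb₀ s hs i j) t i
  have hx : ∀ t < T, ∀ j, ∑ i, x t i j = 1 := fun t ht j =>
    sum_smoothing hθ ht (hxb · · j) (fun s hs i => hzb₀ s hs i j) (fun s hs i => hzxb s hs i j)
  have hx_le : ∀ t < T, ∀ i j, x t i j ≤ 2 * xb t i j := fun t ht i j => by
    have := one_sub_mul_smoothing_le hθ ht (fun s hs i => hxb₀ s hs i j) (hxb · · j)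
      (fun s hs i => hzb₀ s hs i j) (fun s hs i => hzxb s hs i j) i
    dsimp only [x, smoothConnection]
    linarith
  have hswitch : ∑ t ∈ range (T - 1), ∑ i, ∑ j, switchVar x t i j =
      ∑ t ∈ range (T - 1), (#{j | ∃ i, x t i j ≠ x (t + 1) i j} : ℝ) :=
    sum_congr rfl fun t ht => sum_switchVar hx (by grind)
  have hy : ∀ t, ∑ i, f i * (2 * yb t i) = 2 * ∑ i, f i * yb t i := fun t => by
    rw [mul_sum]
    exact sum_congr rfl fun i _ => mul_left_comm ..
  have hcount := mul_sum_card_smoothConnection_ne_le (θ := 1 / 2) (x := xb) (by norm_num) hzb₀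
  refine ⟨x, fun t i => 2 * yb t i, switchVar x,
    feasible_switchVar hx₀ (fun t ht i => by linarith [hyb₀ t ht i]) hx
      (fun t ht i j => by linarith [hx_le t ht i j, hxyb t ht i j]),
    lpCost_le_mul hd_nonneg hg (fun t _ => (hy t).le) hx_le ?_, hswitch.ge⟩
  rw [hswitch]
  linarith

theorem preprocessing_one
    {F C : Type*} [Fintype F] [Fintype C]
    (T : ℕ) (f : F → ℝ) (hf : ∀ i, 0 ≤ f i)
    (d : ℕ → (F ⊕ C) → (F ⊕ C) → ℝ)
    (hd_nonneg : ∀ t, t < T → ∀ u v, 0 ≤ d t u v)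
    (hd_refl : ∀ t, t < T → ∀ u, d t u u = 0)
    (hd_symm : ∀ t, t < T → ∀ u v, d t u v = d t v u)
    (hd_tri : ∀ t, t < T → ∀ u v w, d t u w ≤ d t u v + d t v w)
    (g : ℝ) (hg : 0 ≤ g)
    (xb : ℕ → F → C → ℝ) (yb : ℕ → F → ℝ) (zb : ℕ → F → C → ℝ)
    (hfeas : Feasible T xb yb zb) :
    ∃ (x : ℕ → F → C → ℝ) (y : ℕ → F → ℝ) (z : ℕ → F → C → ℝ),
      Feasible T x y z ∧
      lpCost T f d g x y z ≤ 2 * lpCost T f d g xb yb zb ∧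
      ∑ t ∈ Finset.range (T - 1),
          (((Finset.univ.filter fun j : C => ∃ i : F, x t i j ≠ x (t+1) i j).card : ℝ)) ≤
        ∑ t ∈ Finset.range (T - 1), ∑ i : F, ∑ j : C, z t i j :=
  preprocessing_one_general T f d hd_nonneg g hg xb yb zb hfeas

end DFL0
end

section
/- For every feasible fractional solution (x,y,z) to the dynamic facility location LP relaxation, there exists a modified instance in which each facility i is replaced by finitely many copies having the same opening cost as i and located at the same point as i in every metric d_t, together with a feasible fractional solution (x',y',z') of the same LP cost, such that: (1) for every copy i', client j and time t, x'^t_{i'j} ∈ {0, y'^t_{i'}}; (2) for every copy i' there is a value o_{i'} ∈ [0,1] with y'^t_{i'} ∈ {0, o_{i'}} for every time t; and (3) for any client j and time t, if x^t_{ij} = x^{t+1}_{ij} for all original facilities i, then x'^t_{i'j} = x'^{t+1}_{i'j} for all copies i'. -/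
/-!
STATEMENT 1: For every feasible fractional solution (x,y,z) to the dynamic facility location
LP relaxation, there exists a modified instance in which each facility i is replaced by
finitely many copies having the same opening cost as i and located at the same point as i in
every metric d_t (the copies are indexed by `Fin n`, the map `π` sending each copy to the
original facility; the new opening costs are `f ∘ π` and the new distances are obtained from
`d` by mapping each copy to its original), together with a feasible fractional solution
(x',y',z') of the same LP cost, such that: (1) for every copy i', client j and time t,
x'^t_{i'j} ∈ {0, y'^t_{i'}}; (2) for every copy i' there is a value o_{i'} ∈ [0,1] with
y'^t_{i'} ∈ {0, o_{i'}} for every time t; and (3) for any client j and time t, if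
x^t_{ij} = x^{t+1}_{ij} for all original facilities i, then x'^t_{i'j} = x'^{t+1}_{i'j} for
all copies i'.
-/

open Finset

namespace DFL1

noncomputable section

variable {F C : Type*}

/-- Feasibility for the LP relaxation of the dynamic facility location problem with `T` time
steps (time steps are `0, 1, …, T-1`): nonnegativity, every client fully fractionally
connected at every time step, connection bounded by opening, and `z` dominating the decrease
of the connection variables between consecutive time steps. -/
def Feasible [Fintype F] [Fintype C] (T : ℕ) (x : ℕ → F → C → ℝ) (y : ℕ → F → ℝ)
    (z : ℕ → F → C → ℝ) : Prop :=
  (∀ t, t < T → ∀ i j, 0 ≤ x t i j) ∧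
  (∀ t, t < T → ∀ i, 0 ≤ y t i) ∧
  (∀ t, t + 1 < T → ∀ i j, 0 ≤ z t i j) ∧
  (∀ t, t < T → ∀ j, ∑ i, x t i j = 1) ∧
  (∀ t, t < T → ∀ i j, x t i j ≤ y t i) ∧
  (∀ t, t + 1 < T → ∀ i j, x t i j - x (t+1) i j ≤ z t i j)

/-- The LP cost: hourly opening costs, connection costs, and switching costs. -/
def lpCost [Fintype F] [Fintype C] (T : ℕ) (f : F → ℝ) (d : ℕ → (F ⊕ C) → (F ⊕ C) → ℝ)
    (g : ℝ) (x : ℕ → F → C → ℝ) (y : ℕ → F → ℝ) (z : ℕ → F → C → ℝ) : ℝ :=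
  (∑ t ∈ Finset.range T,
    ((∑ i, f i * y t i) + ∑ i, ∑ j, d t (Sum.inl i) (Sum.inr j) * x t i j)) +
  g * ∑ t ∈ Finset.range (T - 1), ∑ i, ∑ j, z t i j

end

end DFL1

/-!
Cut the half-line into layers whose boundaries are the finitely many values taken by the
`x^t_{ij}` and `y^t_i` (each layer further subdivided so that its height is at most `1`). Every
such value is the sum of the heights of the layers lying below it. Copy `(i, k)` of facility `i`
is opened to the height of layer `k` when `y^t_i` reaches the top of that layer, and serves
client `j` to that height when `x^t_{ij}` does. The copies of `i` therefore carry exactly the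
opening and connection of `i`, so costs and constraints are preserved. Their drops in
connection between consecutive steps are all of one sign, so their positive parts sum to
`(x^t_{ij} - x^{t+1}_{ij})⁺ ≤ z^t_{ij}`; the remaining slack of `z` is put on one copy.
-/

open NNReal

section Telescope

variable {α : Type*} [LinearOrder α] [OrderBot α]

def predIn (s : Finset α) (a : α) : α := (s.filter (· < a)).sup id

lemma predIn_insert_of_lt {s : Finset α} {a b : α} (hb : b < a) :
    predIn (insert a s) b = predIn s b := by
  rw [predIn, predIn, filter_insert, if_neg hb.not_gt]

lemma sum_sub_predIn [AddCommMonoid α] [CanonicallyOrderedAdd α] [Sub α] [OrderedSub α]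
    (s : Finset α) (w : α) :
    ∑ a ∈ s with a ≤ w, (a - predIn s a) = (s.filter (· ≤ w)).sup id := by
  classical
  induction s using Finset.induction_on_max generalizing w with
  | empty => simp [bot_eq_zero']
  | insert a s hlt ih =>
    have hpred : ∀ b ∈ s, predIn (insert a s) b = predIn s b :=
      fun b hb => predIn_insert_of_lt (hlt b hb)
    by_cases hw : a ≤ w
    · have hs : s.filter (· ≤ w) = s := filter_true_of_mem fun b hb => (hlt b hb).le.trans hw
      have hsup : s.sup id ≤ a := Finset.sup_le fun b hb => (hlt b hb).le
      have hpa : predIn (insert a s) a = s.sup id := by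
        rw [predIn, filter_insert, if_neg (lt_irrefl a), filter_true_of_mem hlt]
      have ihw := ih w
      rw [hs] at ihw
      rw [filter_insert, if_pos hw, hs, sum_insert (fun ha => lt_irrefl a (hlt a ha)),
        sum_congr rfl fun b hb => by rw [hpred b hb], ihw, hpa, sup_insert,
        tsub_add_cancel_of_le hsup, id, sup_eq_left.mpr hsup]
    · rw [filter_insert, if_neg hw, sum_congr rfl fun b hb => by rw [hpred b (mem_filter.1 hb).1],
        ih]

lemma sum_sub_predIn_of_mem [AddCommMonoid α] [CanonicallyOrderedAdd α] [Sub α] [OrderedSub α]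
    {s : Finset α} {w : α} (hw : w ∈ s) :
    ∑ a ∈ s with a ≤ w, (a - predIn s a) = w := by
  rw [sum_sub_predIn]
  exact le_antisymm (Finset.sup_le fun a ha => (mem_filter.1 ha).2)
    (le_sup (f := id) (mem_filter.2 ⟨hw, le_rfl⟩))

end Telescope

lemma NNReal.exists_slicing (s : Finset ℝ≥0) :
    ∃ (ι : Type) (_ : Fintype ι) (ℓ c : ι → ℝ≥0),
      (∀ k, ℓ k ≤ 1) ∧ ∀ w ∈ s, ∑ k, (if c k ≤ w then ℓ k else 0) = w := by
  set N : ℕ := ⌈s.sup id⌉₊ + 1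
  -- layer `(a, r)` is the `r`-th of `N` equal pieces of the gap between `a` and its predecessor
  refine ⟨s × Fin N, inferInstance, fun k => (k.1 - predIn s k.1) / N, fun k => k.1, ?_, ?_⟩
  · rintro ⟨a, r⟩
    refine div_le_one_of_le₀ (tsub_le_self.trans ?_) zero_le
    calc (a : ℝ≥0) ≤ s.sup id := le_sup (f := id) a.2
      _ ≤ ⌈s.sup id⌉₊ := Nat.le_ceil _
      _ ≤ N := by norm_cast; omega
  · intro w hw
    have hN : (N : ℝ≥0) ≠ 0 := by positivity
    simp only [Fintype.sum_prod_type, sum_const, card_univ, Fintype.card_fin, nsmul_eq_mul,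
      mul_ite, mul_zero, mul_div_cancel₀ _ hN]
    rw [sum_coe_sort s (fun a => if a ≤ w then a - predIn s a else 0), ← sum_filter,
      sum_sub_predIn_of_mem hw]

noncomputable def layerShare {ι : Type*} (ℓ c : ι → ℝ) (w : ℝ) (k : ι) : ℝ :=
  if c k ≤ w then ℓ k else 0

lemma Real.exists_slicing (s : Finset ℝ) (hs : ∀ w ∈ s, 0 ≤ w) :
    ∃ (ι : Type) (_ : Fintype ι) (ℓ c : ι → ℝ),
      (∀ k, ℓ k ∈ Set.Icc 0 1) ∧ ∀ w ∈ s, ∑ k, layerShare ℓ c w k = w := by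
  obtain ⟨ι, _, ℓ, c, hℓ, hsum⟩ := NNReal.exists_slicing (s.image Real.toNNReal)
  refine ⟨ι, inferInstance, fun k => ℓ k, fun k => c k, fun k => ⟨(ℓ k).2, by exact_mod_cast hℓ k⟩,
    fun w hw => ?_⟩
  have := congrArg ((↑) : ℝ≥0 → ℝ) (hsum w.toNNReal (mem_image_of_mem _ hw))
  simp only [layerShare, ← Real.le_toNNReal_iff_coe_le (hs w hw)]
  push_cast [apply_ite] at this
  rwa [Real.coe_toNNReal _ (hs w hw)] at this

section LayerShare

variable {ι : Type*} {ℓ c : ι → ℝ}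

lemma layerShare_nonneg (hℓ : ∀ k, 0 ≤ ℓ k) (w : ℝ) (k : ι) : 0 ≤ layerShare ℓ c w k := by
  unfold layerShare; split_ifs <;> simp [hℓ k]

lemma layerShare_mono (hℓ : ∀ k, 0 ≤ ℓ k) {w w' : ℝ} (h : w ≤ w') (k : ι) :
    layerShare ℓ c w k ≤ layerShare ℓ c w' k := by
  unfold layerShare; split_ifs <;> first | rfl | exact hℓ k | linarith

lemma layerShare_eq_zero_or_eq (w : ℝ) (k : ι) :
    layerShare ℓ c w k = 0 ∨ layerShare ℓ c w k = ℓ k := by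
  unfold layerShare; split_ifs <;> simp

lemma layerShare_eq_zero_or_eq_of_le {w w' : ℝ} (h : w ≤ w') (k : ι) :
    layerShare ℓ c w k = 0 ∨ layerShare ℓ c w k = layerShare ℓ c w' k := by
  by_cases hw : c k ≤ w
  · exact .inr (by rw [layerShare, layerShare, if_pos hw, if_pos (hw.trans h)])
  · exact .inl (if_neg hw)

lemma sum_max_layerShare_sub [Fintype ι] (hℓ : ∀ k, 0 ≤ ℓ k) {w w' : ℝ}
    (hw : ∑ k, layerShare ℓ c w k = w) (hw' : ∑ k, layerShare ℓ c w' k = w') :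
    ∑ k, max (layerShare ℓ c w k - layerShare ℓ c w' k) 0 = max (w - w') 0 := by
  rcases le_total w w' with h | h
  · rw [max_eq_right (by linarith)]
    exact sum_eq_zero fun k _ => max_eq_right (sub_nonpos.2 (layerShare_mono hℓ h k))
  · calc ∑ k, max (layerShare ℓ c w k - layerShare ℓ c w' k) 0
          = ∑ k, (layerShare ℓ c w k - layerShare ℓ c w' k) :=
            sum_congr rfl fun k _ => max_eq_left (sub_nonneg.2 (layerShare_mono hℓ h k))
        _ = max (w - w') 0 := by rw [sum_sub_distrib, hw, hw', max_eq_left (by linarith)]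

end LayerShare

namespace DFL1

section Split

variable {F C ι : Type*}

lemma Feasible.comp_equiv [Fintype F] [Fintype C] {F' : Type*} [Fintype F'] (e : F' ≃ F)
    {T : ℕ} {x : ℕ → F → C → ℝ} {y : ℕ → F → ℝ} {z : ℕ → F → C → ℝ} (h : Feasible T x y z) :
    Feasible T (fun t i j => x t (e i) j) (fun t i => y t (e i)) (fun t i j => z t (e i) j) := by
  obtain ⟨hx, hy, hz, hsum, hxy, hzx⟩ := h
  exact ⟨fun t ht i => hx t ht (e i), fun t ht i => hy t ht (e i), fun t ht i => hz t ht (e i),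
    fun t ht j => (e.sum_comp (fun i => x t i j)).trans (hsum t ht j),
    fun t ht i => hxy t ht (e i), fun t ht i => hzx t ht (e i)⟩

lemma lpCost_comp_equiv [Fintype F] [Fintype C] {F' : Type*} [Fintype F'] (e : F' ≃ F)
    (T : ℕ) (f : F → ℝ) (d : ℕ → (F ⊕ C) → (F ⊕ C) → ℝ) (g : ℝ) (x : ℕ → F → C → ℝ) (y : ℕ → F → ℝ)
    (z : ℕ → F → C → ℝ) :
    lpCost T (fun i => f (e i)) (fun t u v => d t (Sum.map e id u) (Sum.map e id v)) g
        (fun t i j => x t (e i) j) (fun t i => y t (e i)) (fun t i j => z t (e i) j) =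
      lpCost T f d g x y z := by
  simp only [lpCost, Sum.map_inl, Sum.map_inr, id]
  rw [sum_congr rfl fun t _ => by
      rw [e.sum_comp (fun i => f i * y t i),
        e.sum_comp (fun i => ∑ j, d t (.inl i) (.inr j) * x t i j)],
    sum_congr rfl fun t _ => e.sum_comp (fun i => ∑ j, z t i j)]

lemma lpCost_prod_fst [Fintype F] [Fintype C] [Fintype ι] {T : ℕ} {f : F → ℝ}
    {d : ℕ → (F ⊕ C) → (F ⊕ C) → ℝ} {g : ℝ}
    {x : ℕ → F → C → ℝ} {y : ℕ → F → ℝ} {z : ℕ → F → C → ℝ}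
    {x' : ℕ → F × ι → C → ℝ} {y' : ℕ → F × ι → ℝ} {z' : ℕ → F × ι → C → ℝ}
    (hx : ∀ t, t < T → ∀ i j, ∑ k, x' t (i, k) j = x t i j)
    (hy : ∀ t, t < T → ∀ i, ∑ k, y' t (i, k) = y t i)
    (hz : ∀ t, t + 1 < T → ∀ i j, ∑ k, z' t (i, k) j = z t i j) :
    lpCost T (fun p => f p.1) (fun t u v => d t (Sum.map Prod.fst id u) (Sum.map Prod.fst id v))
        g x' y' z' = lpCost T f d g x y z := by
  simp only [lpCost, Sum.map_inl, Sum.map_inr, id, Fintype.sum_prod_type]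
  congr 1
  · refine sum_congr rfl fun t ht => ?_
    have ht : t < T := mem_range.1 ht
    simp only [← mul_sum, hy t ht]
    rw [sum_congr rfl fun i _ => sum_comm]
    simp only [← mul_sum, hx t ht]
  · refine congrArg (g * ·) (sum_congr rfl fun t ht => ?_)
    have ht : t + 1 < T := by have := mem_range.1 ht; omega
    rw [sum_congr rfl fun i _ => sum_comm]
    simp only [hz t ht]

variable (ℓ c : ι → ℝ)

noncomputable def splitX (x : ℕ → F → C → ℝ) : ℕ → F × ι → C → ℝ :=
  fun t p j => layerShare ℓ c (x t p.1 j) p.2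

noncomputable def splitY (y : ℕ → F → ℝ) : ℕ → F × ι → ℝ :=
  fun t p => layerShare ℓ c (y t p.1) p.2

noncomputable def splitZ [DecidableEq ι] (k₀ : ι) (x z : ℕ → F → C → ℝ) : ℕ → F × ι → C → ℝ :=
  fun t p j => max (splitX ℓ c x t p j - splitX ℓ c x (t + 1) p j) 0 +
    (Pi.single k₀ (z t p.1 j - max (x t p.1 j - x (t + 1) p.1 j) 0) : ι → ℝ) p.2

variable {ℓ c} {T : ℕ} {x : ℕ → F → C → ℝ} {y : ℕ → F → ℝ} {z : ℕ → F → C → ℝ}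

lemma Feasible.max_sub_le [Fintype F] [Fintype C] (h : Feasible T x y z) {t : ℕ}
    (ht : t + 1 < T) (i : F) (j : C) : max (x t i j - x (t + 1) i j) 0 ≤ z t i j := by
  obtain ⟨-, -, hz, -, -, hzx⟩ := h
  exact max_le (hzx t ht i j) (hz t ht i j)

lemma sum_splitZ [Fintype ι] [DecidableEq ι] (hℓ : ∀ k, 0 ≤ ℓ k) (k₀ : ι) {t : ℕ} {i : F}
    {j : C} (hx : ∑ k, layerShare ℓ c (x t i j) k = x t i j)
    (hx' : ∑ k, layerShare ℓ c (x (t + 1) i j) k = x (t + 1) i j) :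
    ∑ k, splitZ ℓ c k₀ x z t (i, k) j = z t i j := by
  simp only [splitZ, splitX, sum_add_distrib, Fintype.sum_pi_single',
    sum_max_layerShare_sub hℓ hx hx']
  ring

lemma Feasible.split [Fintype F] [Fintype C] [Fintype ι] [DecidableEq ι] (h : Feasible T x y z)
    (hℓ : ∀ k, 0 ≤ ℓ k) (k₀ : ι)
    (hx : ∀ t, t < T → ∀ i j, ∑ k, layerShare ℓ c (x t i j) k = x t i j) :
    Feasible T (splitX ℓ c x) (splitY ℓ c y) (splitZ ℓ c k₀ x z) := by
  have hslack : ∀ t, t + 1 < T → ∀ p : F × ι, ∀ j,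
      0 ≤ (Pi.single k₀ (z t p.1 j - max (x t p.1 j - x (t + 1) p.1 j) 0) : ι → ℝ) p.2 :=
    fun t ht p j =>
      (Pi.single_nonneg (α := fun _ => ℝ)).2 (sub_nonneg.2 (h.max_sub_le ht p.1 j)) p.2
  obtain ⟨-, -, -, hsum, hxy, -⟩ := h
  refine ⟨fun t _ p j => layerShare_nonneg hℓ _ _, fun t _ p => layerShare_nonneg hℓ _ _,
    fun t ht p j => add_nonneg (le_max_right _ _) (hslack t ht p j), fun t ht j => ?_,
    fun t ht p j => layerShare_mono hℓ (hxy t ht p.1 j) p.2,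
    fun t ht p j => le_add_of_le_of_nonneg (le_max_left _ _) (hslack t ht p j)⟩
  rw [Fintype.sum_prod_type, ← hsum t ht j]
  exact sum_congr rfl fun i _ => hx t ht i j

lemma lpCost_split [Fintype F] [Fintype C] [Fintype ι] [DecidableEq ι] (hℓ : ∀ k, 0 ≤ ℓ k)
    (k₀ : ι) (f : F → ℝ) (d : ℕ → (F ⊕ C) → (F ⊕ C) → ℝ) (g : ℝ)
    (hx : ∀ t, t < T → ∀ i j, ∑ k, layerShare ℓ c (x t i j) k = x t i j)
    (hy : ∀ t, t < T → ∀ i, ∑ k, layerShare ℓ c (y t i) k = y t i) :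
    lpCost T (fun p => f p.1) (fun t u v => d t (Sum.map Prod.fst id u) (Sum.map Prod.fst id v))
        g (splitX ℓ c x) (splitY ℓ c y) (splitZ ℓ c k₀ x z) = lpCost T f d g x y z :=
  lpCost_prod_fst hx hy fun t ht i j => sum_splitZ hℓ k₀ (hx t (by omega) i j) (hx (t + 1) ht i j)

end Split

theorem preprocessing_two_general
    {F C : Type*} [Fintype F] [Fintype C]
    (T : ℕ) (f : F → ℝ)
    (d : ℕ → (F ⊕ C) → (F ⊕ C) → ℝ)
    (g : ℝ)
    (x : ℕ → F → C → ℝ) (y : ℕ → F → ℝ) (z : ℕ → F → C → ℝ)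
    (hfeas : Feasible T x y z) :
    ∃ (n : ℕ) (π : Fin n → F) (x' : ℕ → Fin n → C → ℝ) (y' : ℕ → Fin n → ℝ)
      (z' : ℕ → Fin n → C → ℝ),
      Feasible T x' y' z' ∧
      lpCost T (fun i' => f (π i'))
          (fun t u v => d t (Sum.map π id u) (Sum.map π id v)) g x' y' z' =
        lpCost T f d g x y z ∧
      (∀ t, t < T → ∀ (i' : Fin n) (j : C), x' t i' j = 0 ∨ x' t i' j = y' t i') ∧
      (∀ i' : Fin n, ∃ o ∈ Set.Icc (0:ℝ) 1, ∀ t, t < T → y' t i' = 0 ∨ y' t i' = o) ∧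
      (∀ (j : C) (t : ℕ), t + 1 < T → (∀ i : F, x t i j = x (t+1) i j) →
        ∀ i' : Fin n, x' t i' j = x' (t+1) i' j) := by
  classical
  have ⟨hx0, hy0, _, _, hxy, _⟩ := hfeas
  -- `1 ∈ S` makes the set of layers nonempty
  set S : Finset ℝ := insert 1 ((range T).biUnion fun t =>
    univ.biUnion fun i => insert (y t i) (univ.image (x t i)))
  have hmem : ∀ w, w ∈ S ↔ w = 1 ∨ ∃ t < T, ∃ i, w = y t i ∨ ∃ j, x t i j = w := by
    simp [S]
  have hS : ∀ w ∈ S, 0 ≤ w := by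
    simp only [hmem]
    rintro w (rfl | ⟨t, ht, i, rfl | ⟨j, rfl⟩⟩)
    exacts [zero_le_one, hy0 t ht i, hx0 t ht i j]
  obtain ⟨ι, _, ℓ, c, hℓ, hrep⟩ := Real.exists_slicing S hS
  have hℓ0 : ∀ k, 0 ≤ ℓ k := fun k => (hℓ k).1
  obtain ⟨k₀⟩ : Nonempty ι := by
    by_contra hempty
    simpa [not_nonempty_iff.1 hempty] using hrep 1 ((hmem 1).2 (.inl rfl))
  have hx : ∀ t, t < T → ∀ i j, ∑ k, layerShare ℓ c (x t i j) k = x t i j :=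
    fun t ht i j => hrep _ ((hmem _).2 (.inr ⟨t, ht, i, .inr ⟨j, rfl⟩⟩))
  have hy : ∀ t, t < T → ∀ i, ∑ k, layerShare ℓ c (y t i) k = y t i :=
    fun t ht i => hrep _ ((hmem _).2 (.inr ⟨t, ht, i, .inl rfl⟩))
  let e := (Fintype.equivFin (F × ι)).symm
  refine ⟨_, fun a => (e a).1, fun t a j => splitX ℓ c x t (e a) j, fun t a => splitY ℓ c y t (e a),
    fun t a j => splitZ ℓ c k₀ x z t (e a) j, (hfeas.split hℓ0 k₀ hx).comp_equiv e,
    (lpCost_comp_equiv e ..).trans (lpCost_split hℓ0 k₀ f d g hx hy),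
    fun t ht a j => layerShare_eq_zero_or_eq_of_le (hxy t ht _ j) _,
    fun a => ⟨ℓ (e a).2, hℓ _, fun t _ => layerShare_eq_zero_or_eq _ _⟩,
    fun j t _ hsame a => by simp only [splitX, hsame]⟩

theorem preprocessing_two
    {F C : Type*} [Fintype F] [Fintype C]
    (T : ℕ) (f : F → ℝ) (hf : ∀ i, 0 ≤ f i)
    (d : ℕ → (F ⊕ C) → (F ⊕ C) → ℝ)
    (hd_nonneg : ∀ t, t < T → ∀ u v, 0 ≤ d t u v)
    (hd_refl : ∀ t, t < T → ∀ u, d t u u = 0)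
    (hd_symm : ∀ t, t < T → ∀ u v, d t u v = d t v u)
    (hd_tri : ∀ t, t < T → ∀ u v w, d t u w ≤ d t u v + d t v w)
    (g : ℝ) (hg : 0 ≤ g)
    (x : ℕ → F → C → ℝ) (y : ℕ → F → ℝ) (z : ℕ → F → C → ℝ)
    (hfeas : Feasible T x y z) :
    ∃ (n : ℕ) (π : Fin n → F) (x' : ℕ → Fin n → C → ℝ) (y' : ℕ → Fin n → ℝ)
      (z' : ℕ → Fin n → C → ℝ),
      Feasible T x' y' z' ∧
      lpCost T (fun i' => f (π i'))
          (fun t u v => d t (Sum.map π id u) (Sum.map π id v)) g x' y' z' =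
        lpCost T f d g x y z ∧
      (∀ t, t < T → ∀ (i' : Fin n) (j : C), x' t i' j = 0 ∨ x' t i' j = y' t i') ∧
      (∀ i' : Fin n, ∃ o ∈ Set.Icc (0:ℝ) 1, ∀ t, t < T → y' t i' = 0 ∨ y' t i' = o) ∧
      (∀ (j : C) (t : ℕ), t + 1 < T → (∀ i : F, x t i j = x (t+1) i j) →
        ∀ i' : Fin n, x' t i' j = x' (t+1) i' j) :=
  preprocessing_two_general T f d g x y z hfeas

end DFL1
end

section
/- In the connection graph H, every simple directed cycle consists of exactly two arcs; equivalently, H contains no simple directed cycle with more than two arcs. -/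
/-!
Two steps of the connection graph lead from a vertex `a` to the neighbour of smallest clock of
`a`'s successor, and `a` itself is one of those neighbours; so the clock never increases along
two steps, and by injectivity of the clock it is unchanged only when the walk returns to `a`.
Along a cycle of length `n` the clock at every second vertex is non-increasing yet `n`-periodic,
hence constant, so every vertex reappears two steps later and `n ∣ 2`. Since arcs join the two
sides of the bipartition there are no loops, which rules out `n = 1`.
-/

namespace DFL2

noncomputable section

variable {F C : Type*}

/-- An element of a nonempty finset minimizing `f`. -/
def argminOn {α : Type*} (f : α → ℝ) (s : Finset α) (h : s.Nonempty) : α :=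
  Classical.choose (s.exists_min_image f h)

/-- Neighbors (facilities) of a client `j` in the bipartite graph `adj`. -/
def facNbrs [Fintype F] (adj : F → C → Prop) [∀ i j, Decidable (adj i j)] (j : C) :
    Finset F :=
  Finset.univ.filter fun i => adj i j

/-- Neighbors (clients) of a facility `i` in the bipartite graph `adj`. -/
def cliNbrs [Fintype C] (adj : F → C → Prop) [∀ i j, Decidable (adj i j)] (i : F) :
    Finset C :=
  Finset.univ.filter fun j => adj i j

/-- The connection graph: every vertex with at least one neighbor has exactly one outgoing
arc, pointing to its neighbor with the smallest clock value. -/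
def nextV [Fintype F] [Fintype C] (adj : F → C → Prop) [∀ i j, Decidable (adj i j)]
    (Q : F → ℝ) (R : C → ℝ) : F ⊕ C → Option (F ⊕ C)
  | Sum.inl i =>
    if h : (cliNbrs adj i).Nonempty then some (Sum.inr (argminOn R _ h)) else none
  | Sum.inr j =>
    if h : (facNbrs adj j).Nonempty then some (Sum.inl (argminOn Q _ h)) else none

end

lemma argminOn_mem {α : Type*} (f : α → ℝ) (s : Finset α) (h : s.Nonempty) :
    argminOn f s h ∈ s :=
  (Classical.choose_spec (s.exists_min_image f h)).1

lemma argminOn_le {α : Type*} (f : α → ℝ) (s : Finset α) (h : s.Nonempty)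
    {x : α} (hx : x ∈ s) : f (argminOn f s h) ≤ f x :=
  (Classical.choose_spec (s.exists_min_image f h)).2 x hx

section ConnectionGraph

variable {F C : Type*} [Fintype F] [Fintype C] {adj : F → C → Prop}
  [∀ i j, Decidable (adj i j)] {Q : F → ℝ} {R : C → ℝ}

lemma exists_of_nextV_inl_eq_some {i : F} {b : F ⊕ C}
    (h : nextV adj Q R (Sum.inl i) = some b) :
    ∃ j, b = Sum.inr j ∧ adj i j ∧ ∀ j', adj i j' → R j ≤ R j' := by
  rw [nextV] at h
  split_ifs at h with hne
  refine ⟨_, (Option.some_injective _ h).symm, ?_, fun j' hj' => argminOn_le R _ hne ?_⟩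
  · exact (Finset.mem_filter.mp (argminOn_mem R _ hne)).2
  · exact Finset.mem_filter.mpr ⟨Finset.mem_univ _, hj'⟩

lemma exists_of_nextV_inr_eq_some {j : C} {b : F ⊕ C}
    (h : nextV adj Q R (Sum.inr j) = some b) :
    ∃ i, b = Sum.inl i ∧ adj i j ∧ ∀ i', adj i' j → Q i ≤ Q i' := by
  rw [nextV] at h
  split_ifs at h with hne
  refine ⟨_, (Option.some_injective _ h).symm, ?_, fun i' hi' => argminOn_le Q _ hne ?_⟩
  · exact (Finset.mem_filter.mp (argminOn_mem Q _ hne)).2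
  · exact Finset.mem_filter.mpr ⟨Finset.mem_univ _, hi'⟩

lemma nextV_ne_some_self (a : F ⊕ C) : nextV adj Q R a ≠ some a := by
  intro h
  cases a with
  | inl i => obtain ⟨j, hj, -⟩ := exists_of_nextV_inl_eq_some h; cases hj
  | inr j => obtain ⟨i, hi, -⟩ := exists_of_nextV_inr_eq_some h; cases hi

lemma clock_le_of_nextV_eq_some_of_nextV_eq_some {a b c : F ⊕ C}
    (hab : nextV adj Q R a = some b) (hbc : nextV adj Q R b = some c) :
    Sum.elim Q R c ≤ Sum.elim Q R a := by
  cases a with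
  | inl i =>
    obtain ⟨j, rfl, hij, -⟩ := exists_of_nextV_inl_eq_some hab
    obtain ⟨i', rfl, -, hmin⟩ := exists_of_nextV_inr_eq_some hbc
    exact hmin i hij
  | inr j =>
    obtain ⟨i, rfl, hij, -⟩ := exists_of_nextV_inr_eq_some hab
    obtain ⟨j', rfl, -, hmin⟩ := exists_of_nextV_inl_eq_some hbc
    exact hmin j hij

end ConnectionGraph

lemma eq_of_le_of_periodic {α : Type*} [PartialOrder α] {s : ℕ → α} {d p : ℕ}
    (hle : ∀ ℓ, s (ℓ + d) ≤ s ℓ) (hper : Function.Periodic s p) (hp : 0 < p) (ℓ : ℕ) :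
    s (ℓ + d) = s ℓ := by
  have hanti : Antitone fun k => s (ℓ + k * d) :=
    antitone_nat_of_succ_le fun k => by simpa [add_mul, add_assoc] using hle (ℓ + k * d)
  refine le_antisymm (hle ℓ) ?_
  calc s ℓ = s (ℓ + d * p) := (hper.nat_mul d ℓ).symm
    _ = s (ℓ + p * d) := by rw [mul_comm]
    _ ≤ s (ℓ + 1 * d) := hanti hp
    _ = s (ℓ + d) := by rw [one_mul]

/-- Every simple directed cycle of the connection graph has exactly two arcs. -/
theorem no_long_cycles_in_connection_graph
    {F C : Type*} [Fintype F] [Fintype C]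
    (adj : F → C → Prop) [∀ i j, Decidable (adj i j)]
    (Q : F → ℝ) (R : C → ℝ)
    (hdistinct : Function.Injective (Sum.elim Q R))
    (n : ℕ) (hn : 1 ≤ n) (v : ℕ → F ⊕ C)
    (hsimple : ∀ a b, a < n → b < n → v a = v b → a = b)
    (hcycle : ∀ ℓ, ℓ < n → nextV adj Q R (v ℓ) = some (v ((ℓ + 1) % n))) :
    n = 2 := by
  set w : ℕ → F ⊕ C := fun ℓ => v (ℓ % n)
  have hstep (ℓ : ℕ) : nextV adj Q R (w ℓ) = some (w (ℓ + 1)) := by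
    simpa only [w, Nat.mod_add_mod] using hcycle (ℓ % n) (Nat.mod_lt _ hn)
  have hper : Function.Periodic (Sum.elim Q R ∘ w) n := fun ℓ => by simp [w]
  have hret : w 2 = w 0 := hdistinct <| eq_of_le_of_periodic (d := 2)
    (fun ℓ => clock_le_of_nextV_eq_some_of_nextV_eq_some (hstep ℓ) (hstep (ℓ + 1))) hper hn 0
  have hdvd : n ∣ 2 := Nat.dvd_of_mod_eq_zero (hsimple _ _ (Nat.mod_lt _ hn) hn hret)
  obtain rfl | rfl := (Nat.dvd_prime Nat.prime_two).mp hdvd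
  · exact absurd (hcycle 0 one_pos) (nextV_ne_some_self _)
  · rfl

end DFL2
end

section
/- Let F be a finite set and let x^1, …, x^m be vectors of nonnegative reals indexed by F with ∑_{i∈F} x^t_i = 1 for every t ∈ {1,…,m}. If ∑_{i∈F} min_{1≤u≤m} x^u_i < 1/2, then ∑_{t=1}^{m−1} ∑_{i∈F} max(x^t_i − x^{t+1}_i, 0) > 1/2. -/
/-!
Fix a coordinate `i` and a time `u` at which `x^u_i` is minimal. The drop `x^1_i - x^u_i`
telescopes into the one-step drops between times `1` and `u`, so it is at most the positive
variation of `x_i`. Summing over `i`, the total positive variation is at least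
`∑ i, x^1_i - ∑ i, min_u x^u_i = 1 - ∑ i, min_u x^u_i > 1/2`.
-/

open Finset

section

variable {α : Type*} [AddCommGroup α] [LinearOrder α] [IsOrderedAddMonoid α]

theorem sub_le_sum_Ico_max_sub_zero (a : ℕ → α) {s u n : ℕ} (hsu : s ≤ u) (hun : u ≤ n) :
    a s - a u ≤ ∑ t ∈ Ico s n, max (a t - a (t + 1)) 0 := by
  have telescope : a s - a u = ∑ t ∈ Ico s u, (a t - a (t + 1)) := by
    simpa only [neg_sub_neg] using (sum_Ico_sub (fun t => -a t) hsu).symm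
  calc a s - a u ≤ ∑ t ∈ Ico s u, max (a t - a (t + 1)) 0 :=
        telescope ▸ sum_le_sum fun t _ => le_max_left _ _
    _ ≤ ∑ t ∈ Ico s n, max (a t - a (t + 1)) 0 :=
        sum_le_sum_of_subset_of_nonneg (Ico_subset_Ico_right hun) fun t _ _ => le_max_right _ _

theorem sum_sub_inf'_Icc_le_sum_Ico {ι : Type*} [Fintype ι] (x : ℕ → ι → α) {s n : ℕ}
    (hsn : s ≤ n) :
    ∑ i, (x s i - (Icc s n).inf' (nonempty_Icc.mpr hsn) (x · i)) ≤
      ∑ t ∈ Ico s n, ∑ i, max (x t i - x (t + 1) i) 0 := by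
  rw [sum_comm]
  refine sum_le_sum fun i _ => ?_
  obtain ⟨u, hu, hmin⟩ := exists_mem_eq_inf' (nonempty_Icc.mpr hsn) (x · i)
  rw [mem_Icc] at hu
  exact hmin ▸ sub_le_sum_Ico_max_sub_zero (x · i) hu.1 hu.2

end

theorem total_variation_of_low_min_mass_general
    {F : Type*} [Fintype F] (m : ℕ) (hm : 1 ≤ m) (x : ℕ → F → ℝ)
    (hsum : ∀ t, 1 ≤ t → t ≤ m → ∑ i, x t i = 1)
    (hmin : ∑ i : F, (Finset.Icc 1 m).inf' (Finset.nonempty_Icc.mpr hm) (fun t => x t i)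
        < 1 / 2) :
    1 / 2 < ∑ t ∈ Finset.Icc 1 (m - 1), ∑ i : F, max (x t i - x (t+1) i) 0 := by
  have hdrop := sum_sub_inf'_Icc_le_sum_Ico x hm
  rw [sum_sub_distrib, hsum 1 le_rfl hm] at hdrop
  rw [← Ico_add_one_right_eq_Icc, Nat.sub_add_cancel hm]
  linarith

theorem total_variation_of_low_min_mass
    {F : Type*} [Fintype F] (m : ℕ) (hm : 1 ≤ m) (x : ℕ → F → ℝ)
    (hnonneg : ∀ t, 1 ≤ t → t ≤ m → ∀ i, 0 ≤ x t i)
    (hsum : ∀ t, 1 ≤ t → t ≤ m → ∑ i, x t i = 1)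
    (hmin : ∑ i : F, (Finset.Icc 1 m).inf' (Finset.nonempty_Icc.mpr hm) (fun t => x t i)
        < 1 / 2) :
    1 / 2 < ∑ t ∈ Finset.Icc 1 (m - 1), ∑ i : F, max (x t i - x (t+1) i) 0 :=
  total_variation_of_low_min_mass_general m hm x hsum hmin
end
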